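/- arXiv:1407.4093 — 3 statements merged into one kernel-verified Lean document; each statement's English description precedes it below -/
import Mathlib

section
/- Let φ : ℝ → ℝ be self-equivarying with index ρ ≥ 0 and suppose 1/φ is locally integrable on [0,∞). Then for every s ≥ 0, τ_φ(x + sφ(x)) − τ_φ(x) → τ_η(s) as x → ∞, locally uniformly in s on [0,∞), where τ_φ(x) := ∫₀^x dw/φ(w) and τ_η(s) := ∫₀^s dw/(1 + ρw) (so τ_η(s) = ρ⁻¹ log(1 + ρs) for ρ > 0 and τ_η(s) = s for ρ = 0). In particular, if ρ = 0 then τ_φ(x + sφ(x)) − τ_φ(x) → s locally uniformly. -/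
open Filter Topology MeasureTheory

/-- A function `φ : ℝ → ℝ` is *self-equivarying* with index `ρ`:
`φ` is eventually positive, `φ(x) = O(x)` at infinity, and
`φ(x + t φ(x))/φ(x) → 1 + ρ t` locally uniformly in `t ∈ [0,∞)`. -/
def IsSelfEquivarying (φ : ℝ → ℝ) (ρ : ℝ) : Prop :=
  (∀ᶠ x in atTop, 0 < φ x) ∧
  (φ =O[atTop] fun x => x) ∧
  ∀ T > 0, TendstoUniformlyOn (fun x t => φ (x + t * φ x) / φ x)
    (fun t => 1 + ρ * t) atTop (Set.Icc 0 T)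

/-- The occupation time `τ_φ(x) = ∫₀^x dw/φ(w)`. -/
noncomputable def tauPhi (φ : ℝ → ℝ) (x : ℝ) : ℝ :=
  ∫ w in (0:ℝ)..x, 1 / φ w

/-!
Substituting `w = x + t φ(x)` turns `τ_φ(x + s φ(x)) − τ_φ(x)` into `∫₀^s φ(x) / φ(x + t φ(x)) dt`.
Self-equivariance says the reciprocal of this integrand tends to `1 + ρ t ≥ 1` uniformly on
`[0, S]`, so the integrand itself tends uniformly to `1 / (1 + ρ t)`; uniform convergence of
integrands on `[0, S]` gives convergence of their integrals over `[0, s]`, uniformly in `s ≤ S`.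
-/

theorem MeasureTheory.LocallyIntegrableOn.intervalIntegrable {E : Type*} [NormedAddCommGroup E]
    {f : ℝ → E} {s : Set ℝ} {a b : ℝ} (hf : LocallyIntegrableOn f s) (hab : Set.uIcc a b ⊆ s) :
    IntervalIntegrable f volume a b :=
  (hf.integrableOn_compact_subset hab isCompact_uIcc).intervalIntegrable

theorem TendstoUniformlyOn.inv_of_le {ι α : Type*} {l : Filter ι} {F : ι → α → ℝ} {f : α → ℝ}
    {s : Set α} {c : ℝ} (hc : 0 < c) (hf : ∀ t ∈ s, c ≤ f t) (h : TendstoUniformlyOn F f l s) :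
    TendstoUniformlyOn (fun i t => (F i t)⁻¹) (fun t => (f t)⁻¹) l s := by
  rw [Metric.tendstoUniformlyOn_iff] at h ⊢
  intro ε hε
  -- `δ ≤ c / 2` keeps `F i t` above `c / 2`, so `|(f t)⁻¹ - (F i t)⁻¹| < δ / (c * (c / 2)) ≤ ε`.
  filter_upwards [h (min (c / 2) (ε * c ^ 2 / 2)) (lt_min (by positivity) (by positivity))]
    with i hi t ht
  have hdist := hi t ht
  rw [lt_min_iff, Real.dist_eq] at hdist
  have hfc := hf t ht
  have hF : c / 2 < F i t := by linarith [(abs_lt.mp hdist.1).2]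
  have hprod : c * (c / 2) ≤ f t * F i t := mul_le_mul hfc hF.le (by positivity) (by linarith)
  have hpos : 0 < f t * F i t := by nlinarith
  rw [Real.dist_eq, inv_sub_inv (by linarith) (by linarith), abs_div, abs_of_pos hpos,
    div_lt_iff₀ hpos, abs_sub_comm]
  calc |f t - F i t| < ε * c ^ 2 / 2 := hdist.2
    _ = ε * (c * (c / 2)) := by ring
    _ ≤ ε * (f t * F i t) := by gcongr

theorem TendstoUniformlyOn.intervalIntegral {ι E : Type*} [NormedAddCommGroup E] [NormedSpace ℝ E]
    {l : Filter ι} {F : ι → ℝ → E} {f : ℝ → E} {a b : ℝ}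
    (hF : ∀ᶠ i in l, IntervalIntegrable (F i) volume a b) (hf : IntervalIntegrable f volume a b)
    (h : TendstoUniformlyOn F f l (Set.Icc a b)) :
    TendstoUniformlyOn (fun i s => ∫ t in a..s, F i t) (fun s => ∫ t in a..s, f t) l
      (Set.Icc a b) := by
  rw [Metric.tendstoUniformlyOn_iff] at h ⊢
  intro ε hε
  filter_upwards [hF, h (ε / (|b - a| + 1)) (by positivity)] with i hFi hi s hs
  obtain ⟨has, hsb⟩ := hs
  have hsub : Set.uIcc a s ⊆ Set.uIcc a b :=
    Set.uIcc_subset_uIcc_left (Set.Icc_subset_uIcc ⟨has, hsb⟩)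
  rw [dist_eq_norm, ← intervalIntegral.integral_sub (hf.mono_set hsub) (hFi.mono_set hsub)]
  have hbound : ∀ t ∈ Set.uIoc a s, ‖f t - F i t‖ ≤ ε / (|b - a| + 1) := by
    intro t ht
    have ht' := Set.uIoc_subset_uIcc.trans hsub ht
    rw [Set.uIcc_of_le (has.trans hsb)] at ht'
    exact (dist_eq_norm (f t) (F i t) ▸ hi t ht').le
  calc ‖∫ t in a..s, f t - F i t‖ ≤ ε / (|b - a| + 1) * |s - a| :=
        intervalIntegral.norm_integral_le_of_norm_le_const hbound
    _ ≤ ε / (|b - a| + 1) * |b - a| := by gcongr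
    _ < ε := by
        rw [div_mul_eq_mul_div, div_lt_iff₀ (by positivity)]
        nlinarith [abs_nonneg (b - a)]

section OccupationTime

variable {φ : ℝ → ℝ} {x : ℝ}

theorem tauPhi_add_mul_sub (hloc : LocallyIntegrableOn (fun w => 1 / φ w) (Set.Ici 0))
    (hx : 0 ≤ x) {s : ℝ} (hxs : 0 ≤ x + s * φ x) :
    tauPhi φ (x + s * φ x) - tauPhi φ x = ∫ t in (0:ℝ)..s, φ x / φ (x + t * φ x) := by
  have hint : ∀ {y}, 0 ≤ y → IntervalIntegrable (fun w => 1 / φ w) volume 0 y := fun hy =>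
    hloc.intervalIntegrable (by rw [Set.uIcc_of_le hy]; exact Set.Icc_subset_Ici_self)
  rw [tauPhi, tauPhi, intervalIntegral.integral_interval_sub_left (hint hxs) (hint hx)]
  have := intervalIntegral.smul_integral_comp_add_mul (a := 0) (b := s) (fun w => 1 / φ w) (φ x) x
  simp only [mul_zero, add_zero, smul_eq_mul] at this
  rw [mul_comm s, ← this, ← intervalIntegral.integral_const_mul]
  simp only [mul_one_div, mul_comm _ (φ x)]

theorem intervalIntegrable_div_comp_add_mul
    (hloc : LocallyIntegrableOn (fun w => 1 / φ w) (Set.Ici 0)) (hx : 0 ≤ x) (hφx : 0 < φ x)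
    {S : ℝ} (hS : 0 ≤ S) :
    IntervalIntegrable (fun t => φ x / φ (x + t * φ x)) volume 0 S := by
  have hxS : IntervalIntegrable (fun w => 1 / φ w) volume x (x + S * φ x) :=
    hloc.intervalIntegrable <| by
      rw [Set.uIcc_of_le (by nlinarith)]
      exact Set.Icc_subset_Ici_iff (by nlinarith) |>.mpr hx
  have := ((hxS.comp_add_left x).comp_mul_left (c := φ x)).const_mul (φ x)
  rw [sub_self, zero_div, add_sub_cancel_left, mul_div_cancel_right₀ _ hφx.ne'] at this
  simpa only [mul_one_div, mul_comm _ (φ x)] using this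

theorem tendstoUniformlyOn_tauPhi_add_mul_sub {ρ : ℝ} (hρ : 0 ≤ ρ) (hφ : IsSelfEquivarying φ ρ)
    (hloc : LocallyIntegrableOn (fun w => 1 / φ w) (Set.Ici 0)) {S : ℝ} (hS : 0 < S) :
    TendstoUniformlyOn (fun x s => tauPhi φ (x + s * φ x) - tauPhi φ x)
      (fun s => ∫ w in (0:ℝ)..s, 1 / (1 + ρ * w)) atTop (Set.Icc 0 S) := by
  obtain ⟨hpos, -, hratio⟩ := hφ
  have hlim_ge : ∀ t ∈ Set.Icc 0 S, 1 ≤ 1 + ρ * t := fun t ht =>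
    le_add_of_nonneg_right (mul_nonneg hρ ht.1)
  have hinv : TendstoUniformlyOn (fun x t => φ x / φ (x + t * φ x))
      (fun t => 1 / (1 + ρ * t)) atTop (Set.Icc 0 S) := by
    simpa only [inv_div, one_div] using (hratio S hS).inv_of_le one_pos hlim_ge
  have hlim_int : IntervalIntegrable (fun t => 1 / (1 + ρ * t)) volume 0 S := by
    refine ContinuousOn.intervalIntegrable (continuousOn_const.div (by fun_prop) ?_)
    intro t ht
    rw [Set.uIcc_of_le hS.le] at ht
    exact (zero_lt_one.trans_le (hlim_ge t ht)).ne'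
  refine (hinv.intervalIntegral ?_ hlim_int).congr ?_
  · filter_upwards [hpos, eventually_ge_atTop 0] with x hφx hx
    exact intervalIntegrable_div_comp_add_mul hloc hx hφx hS.le
  · filter_upwards [hpos, eventually_ge_atTop 0] with x hφx hx s hs
    exact (tauPhi_add_mul_sub hloc hx (by nlinarith [hs.1])).symm

end OccupationTime

/-- For `φ` self-equivarying with index `ρ ≥ 0` and `1/φ` locally integrable on `[0,∞)`,
`τ_φ(x + s φ(x)) − τ_φ(x) → τ_η(s) = ∫₀^s dw/(1 + ρ w)` locally uniformly in `s ∈ [0,∞)`;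
in particular for `ρ = 0` the limit is `s` itself. -/
theorem beurling_occupation_time_convergence (φ : ℝ → ℝ) (ρ : ℝ) (hρ : 0 ≤ ρ)
    (hφ : IsSelfEquivarying φ ρ)
    (hloc : LocallyIntegrableOn (fun w => 1 / φ w) (Set.Ici 0)) :
    (∀ S > 0, TendstoUniformlyOn
      (fun x s => tauPhi φ (x + s * φ x) - tauPhi φ x)
      (fun s => ∫ w in (0:ℝ)..s, 1 / (1 + ρ * w)) atTop (Set.Icc 0 S)) ∧
    (ρ = 0 → ∀ S > 0, TendstoUniformlyOn
      (fun x s => tauPhi φ (x + s * φ x) - tauPhi φ x)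
      (fun s => s) atTop (Set.Icc 0 S)) := by
  refine ⟨fun S hS => tendstoUniformlyOn_tauPhi_add_mul_sub hρ hφ hloc hS, fun hρ0 S hS => ?_⟩
  simpa [hρ0] using tendstoUniformlyOn_tauPhi_add_mul_sub hρ hφ hloc hS
end

section
/- Let ρ > 0, let g : [0,∞) → ℝ be positive with g(y + t)/g(y) → e^{ρt} as y → ∞ for every t ≥ 0, and let V : [0,∞) → ℝ be such that for every s ≥ 0 the limit K_V(s) := lim_{y→∞} (V(y + s) − V(y))/g(y) exists and is finite. Then K_V satisfies the Goldie functional equation K_V(s + t) = K_V(s)·e^{ρt} + K_V(t) for all s, t ≥ 0, and consequently there is c ∈ ℝ with K_V(s) = c·H_ρ(s) = c·(e^{ρs} − 1)/ρ for all s ≥ 0. -/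
open Filter Topology

/-! Shifting `y` by `t` splits the increment of `V` over `[y, y + s + t]` into the increment over
`[y + t, y + t + s]`, normalised by `g (y + t) ≈ e^{ρt} g y`, and the increment over `[y, y + t]`;
this is the Goldie equation. Comparing its two instances for `K (s + 1)` (namely `(s, 1)` and
`(1, s)`) then determines `K s` linearly in `K 1`. -/

def GoldieEquation (ρ : ℝ) (K : ℝ → ℝ) : Prop :=
  ∀ s ≥ (0:ℝ), ∀ t ≥ (0:ℝ), K (s + t) = K s * Real.exp (ρ * t) + K t

theorem tendsto_increment_add {g V : ℝ → ℝ} {s t k a b : ℝ} (hg0 : ∀ᶠ y in atTop, g y ≠ 0)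
    (hgt : Tendsto (fun y => g (y + t) / g y) atTop (𝓝 a))
    (hKs : Tendsto (fun y => (V (y + s) - V y) / g y) atTop (𝓝 k))
    (hKt : Tendsto (fun y => (V (y + t) - V y) / g y) atTop (𝓝 b)) :
    Tendsto (fun y => (V (y + (s + t)) - V y) / g y) atTop (𝓝 (k * a + b)) := by
  have hKs_shift : Tendsto (fun y => (V (y + t + s) - V (y + t)) / g (y + t)) atTop (𝓝 k) :=
    hKs.comp (tendsto_atTop_add_const_right atTop t tendsto_id)
  refine ((hKs_shift.mul hgt).add hKt).congr' ?_
  filter_upwards [hg0, (tendsto_atTop_add_const_right atTop t tendsto_id).eventually hg0]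
    with y hy hyt
  change g (y + t) ≠ 0 at hyt
  rw [show y + (s + t) = y + t + s by ring]
  field_simp
  ring

theorem goldieEquation_of_tendsto {ρ : ℝ} {g V K : ℝ → ℝ} (hg0 : ∀ᶠ y in atTop, g y ≠ 0)
    (hg : ∀ t ≥ (0:ℝ), Tendsto (fun y => g (y + t) / g y) atTop (𝓝 (Real.exp (ρ * t))))
    (hK : ∀ s ≥ (0:ℝ), Tendsto (fun y => (V (y + s) - V y) / g y) atTop (𝓝 (K s))) :
    GoldieEquation ρ K := fun s hs t ht =>
  tendsto_nhds_unique (hK (s + t) (add_nonneg hs ht))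
    (tendsto_increment_add hg0 (hg t ht) (hK s hs) (hK t ht))

theorem GoldieEquation.eq_mul_expSub_div {ρ : ℝ} {K : ℝ → ℝ} (hρ : ρ ≠ 0)
    (hK : GoldieEquation ρ K) (s : ℝ) (hs : 0 ≤ s) :
    K s = ρ * K 1 / (Real.exp ρ - 1) * ((Real.exp (ρ * s) - 1) / ρ) := by
  have hexp : Real.exp ρ - 1 ≠ 0 := sub_ne_zero.mpr ((Real.exp_eq_one_iff ρ).not.mpr hρ)
  have h_comm : K s * (Real.exp ρ - 1) = K 1 * (Real.exp (ρ * s) - 1) := by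
    have h_s1 := hK s hs 1 zero_le_one
    have h_1s := hK 1 zero_le_one s hs
    rw [add_comm, h_s1, mul_one] at h_1s
    linarith
  field_simp
  linear_combination h_comm

/-- If `g > 0` on `[0,∞)` is additively regularly varying with index `ρ > 0`
(`g(y+t)/g(y) → e^{ρt}` for `t ≥ 0`) and the limits
`K_V(s) = lim_{y→∞} (V(y+s) − V(y))/g(y)` exist for all `s ≥ 0`, then `K_V`
satisfies the Goldie functional equation `K_V(s+t) = K_V(s) e^{ρt} + K_V(t)` on `[0,∞)`,
and hence `K_V(s) = c (e^{ρs} − 1)/ρ` for some constant `c`. -/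
theorem goldie_equation_for_moving_average (ρ : ℝ) (hρ : 0 < ρ)
    (g : ℝ → ℝ) (hgpos : ∀ y ≥ (0:ℝ), 0 < g y)
    (hg : ∀ t ≥ (0:ℝ), Tendsto (fun y => g (y + t) / g y) atTop (nhds (Real.exp (ρ * t))))
    (V : ℝ → ℝ) (K : ℝ → ℝ)
    (hK : ∀ s ≥ (0:ℝ), Tendsto (fun y => (V (y + s) - V y) / g y) atTop (nhds (K s))) :
    (∀ s ≥ (0:ℝ), ∀ t ≥ (0:ℝ), K (s + t) = K s * Real.exp (ρ * t) + K t) ∧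
    (∃ c : ℝ, ∀ s ≥ (0:ℝ), K s = c * ((Real.exp (ρ * s) - 1) / ρ)) := by
  have hg0 : ∀ᶠ y in atTop, g y ≠ 0 :=
    (eventually_ge_atTop 0).mono fun y hy => (hgpos y hy).ne'
  have hGoldie : GoldieEquation ρ K := goldieEquation_of_tendsto hg0 hg hK
  exact ⟨hGoldie, _, hGoldie.eq_mul_expSub_div hρ.ne'⟩
end

section
/- Let φ : ℝ → ℝ be self-equivarying with index ρ > 0 and h : ℝ → ℝ. Suppose A_u is dense in G₊^ρ = (−1/ρ, ∞) and H†(t) = K(t) for every t ∈ A_u (so that H† restricted to A_u is a homomorphism from (A_u, ∘_ρ) to (ℝ, +)). Then A_u = G₊^ρ and there is c ∈ ℝ such that H†(t) = c·log(1 + ρt) for all t > −1/ρ. -/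
open Filter Topology

/-- `Δ_s^φ h(x) = h(x + sφ(x)) − h(x)` converges to the finite limit `L`
locally uniformly near `t`. -/
def ConvNear (φ h : ℝ → ℝ) (t L : ℝ) : Prop :=
  ∀ ε > 0, ∃ δ > 0, ∃ X : ℝ, ∀ x > X, ∀ s : ℝ, |s - t| < δ →
    |(h (x + s * φ x) - h x) - L| < ε

/-- `A_u`: the set of `t > ρ*` at which `Δ_t^φ h` converges to a finite limit
locally uniformly near `t`. -/
def Au (φ h : ℝ → ℝ) (ρ : ℝ) : Set ℝ :=
  {t | 0 < 1 + ρ * t ∧ ∃ L : ℝ, ConvNear φ h t L}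

/-- `H†(t) = lim_{δ↓0} limsup_{x→∞} sup { h(x + sφ(x)) − h(x) : s ∈ [t, t+δ) }`,
valued in `EReal`. -/
noncomputable def Hdag (φ h : ℝ → ℝ) (t : ℝ) : EReal :=
  ⨅ δ ∈ Set.Ioi (0:ℝ),
    Filter.limsup (fun x => ⨆ s ∈ Set.Ico t (t + δ),
      ((h (x + s * φ x) - h x : ℝ) : EReal)) Filter.atTop

/-!
If `Δ_s h(x) → K(v)` locally uniformly near `v` and `Δ_u h(x) → K(u)` for some `u ≥ 0`, write
`x + sφ(x) = x' + wφ(x')` with `x' = x + uφ(x)` and `w = (s - u)φ(x)/φ(x') ≈ (s - u)/(1 + ρu)`;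
then `Δ_s h(x) = Δ_w h(x') + Δ_u h(x) → K(u) + K(v)` locally uniformly near `u ∘_ρ v`, with a
radius that is uniform for `u` in a bounded range. As `u ↦ u ∘_ρ v` is an increasing affine
bijection, density of `A_u` and this uniformity give the Cauchy criterion at every `t > -1/ρ`, so
`A_u = G₊^ρ`. Then `K` is a continuous homomorphism `(G₊^ρ, ∘_ρ) → (ℝ, +)`, and conjugating by
`y ↦ (e^y - 1)/ρ` makes it a continuous additive function on `ℝ`, hence linear.
-/

open Set

/-- `shiftDiff φ h (x, s)` is the paper's `Δ_s^φ h(x)`. -/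
def shiftDiff (φ h : ℝ → ℝ) (p : ℝ × ℝ) : ℝ := h (p.1 + p.2 * φ p.1) - h p.1

/-- The Popa operation `u ∘_ρ v`. -/
def popa (ρ u v : ℝ) : ℝ := u + v * (1 + ρ * u)

lemma one_add_mul_popa (ρ u v : ℝ) : 1 + ρ * popa ρ u v = (1 + ρ * u) * (1 + ρ * v) := by
  unfold popa; ring

lemma neg_one_div_lt_iff {ρ t : ℝ} (hρ : 0 < ρ) : -1 / ρ < t ↔ 0 < 1 + ρ * t := by
  rw [div_lt_iff₀ hρ]; constructor <;> intro h <;> linarith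

lemma neg_one_div_lt_of_nonneg {ρ u : ℝ} (hρ : 0 < ρ) (hu : 0 ≤ u) : -1 / ρ < u :=
  (div_neg_of_neg_of_pos (by norm_num) hρ).trans_le hu

lemma neg_one_div_lt_popa {ρ u v : ℝ} (hρ : 0 < ρ) (hu : 0 ≤ u) (hv : -1 / ρ < v) :
    -1 / ρ < popa ρ u v := by
  rw [neg_one_div_lt_iff hρ, one_add_mul_popa]
  exact mul_pos (by positivity) ((neg_one_div_lt_iff hρ).mp hv)

lemma convNear_iff_tendsto {φ h : ℝ → ℝ} {t L : ℝ} :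
    ConvNear φ h t L ↔ Tendsto (shiftDiff φ h) (atTop ×ˢ 𝓝 t) (𝓝 L) := by
  rw [(atTop_basis_Ioi.prod Metric.nhds_basis_ball).tendsto_iff Metric.nhds_basis_ball]
  simp only [ConvNear, shiftDiff, Prod.forall, mem_prod, mem_Ioi, Metric.mem_ball,
    Real.dist_eq, true_and, and_imp, Prod.exists]
  exact forall₂_congr fun ε _ => ⟨fun ⟨δ, hδ, X, hX⟩ => ⟨X, δ, hδ, fun x s hx hs => hX x hx s hs⟩,
    fun ⟨X, δ, hδ, hX⟩ => ⟨δ, hδ, X, fun x hx s hs => hX x s hx hs⟩⟩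

lemma mem_Au_iff {φ h : ℝ → ℝ} {ρ t : ℝ} (hρ : 0 < ρ) :
    t ∈ Au φ h ρ ↔ -1 / ρ < t ∧ ∃ L, Tendsto (shiftDiff φ h) (atTop ×ˢ 𝓝 t) (𝓝 L) := by
  show (0 < 1 + ρ * t ∧ ∃ L, ConvNear φ h t L) ↔ _
  simp only [neg_one_div_lt_iff hρ, convNear_iff_tendsto]

lemma exists_tendsto_of_forall_eventually_abs_sub_lt {α : Type*} {l : Filter α} [l.NeBot]
    {f : α → ℝ} (hf : ∀ ε > 0, ∃ c, ∀ᶠ a in l, |f a - c| < ε) : ∃ L, Tendsto f l (𝓝 L) := by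
  refine cauchy_map_iff_exists_tendsto.mp (Metric.cauchy_iff.mpr ⟨inferInstance, fun ε hε => ?_⟩)
  obtain ⟨c, hc⟩ := hf (ε / 2) (half_pos hε)
  refine ⟨f '' {a | |f a - c| < ε / 2}, image_mem_map hc, ?_⟩
  rintro _ ⟨a, ha, rfl⟩ _ ⟨b, hb, rfl⟩
  calc dist (f a) (f b) ≤ dist (f a) c + dist (f b) c := dist_triangle_right _ _ _
    _ < ε / 2 + ε / 2 := add_lt_add ha hb
    _ = ε := add_halves ε

lemma continuousAt_of_tendsto_prod {α β γ : Type*} [TopologicalSpace β] [PseudoMetricSpace γ]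
    {l : Filter α} [l.NeBot] {F : α × β → γ} {K : β → γ} {t : β}
    (hpt : ∀ᶠ t' in 𝓝 t, Tendsto (fun x => F (x, t')) l (𝓝 (K t')))
    (ht : Tendsto F (l ×ˢ 𝓝 t) (𝓝 (K t))) : ContinuousAt K t := by
  refine Metric.tendsto_nhds.mpr fun ε hε => ?_
  obtain ⟨pa, hpa, pb, hpb, hF⟩ :=
    eventually_prod_iff.mp (Metric.tendsto_nhds.mp ht (ε / 2) (half_pos hε))
  filter_upwards [hpt, hpb] with t' ht' hpbt'
  have : K t' ∈ Metric.closedBall (K t) (ε / 2) :=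
    Metric.isClosed_closedBall.mem_of_tendsto ht' (hpa.mono fun x hx => (hF hx hpbt').le)
  exact this.trans_lt (half_lt_self hε)

lemma shiftDiff_eq_shiftDiff_add {φ : ℝ → ℝ} (h : ℝ → ℝ) {x u : ℝ} (s : ℝ)
    (hφ : φ (x + u * φ x) ≠ 0) :
    shiftDiff φ h (x, s) =
      shiftDiff φ h (x + u * φ x, (s - u) / (φ (x + u * φ x) / φ x)) + shiftDiff φ h (x, u) := by
  have hpt : x + u * φ x + (s - u) / (φ (x + u * φ x) / φ x) * φ (x + u * φ x) = x + s * φ x := by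
    rw [div_div_eq_mul_div, div_mul_cancel₀ _ hφ]; ring
  simp only [shiftDiff, hpt]
  ring

lemma abs_div_sub_lt_of_abs_sub_lt {d ψ a v δ η : ℝ} (hψ : 1 / 2 < ψ) (hd : |d - v * a| < δ / 4)
    (ha : |a - ψ| < η) (hη : |v| * η ≤ δ / 4) : |d / ψ - v| < δ := by
  have hψ0 : 0 < ψ := by linarith
  have hnum : |(d - v * a) + v * (a - ψ)| < δ / 2 :=
    calc |(d - v * a) + v * (a - ψ)| ≤ |d - v * a| + |v| * |a - ψ| := by
          rw [← abs_mul]; exact abs_add_le _ _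
      _ < δ / 4 + δ / 4 := add_lt_add_of_lt_of_le hd
          ((mul_le_mul_of_nonneg_left ha.le (abs_nonneg v)).trans hη)
      _ = δ / 2 := by ring
  have hδ : 0 < δ := by linarith [abs_nonneg (d - v * a)]
  rw [show d / ψ - v = ((d - v * a) + v * (a - ψ)) / ψ by field_simp; ring, abs_div,
    abs_of_pos hψ0, div_lt_iff₀ hψ0]
  nlinarith

lemma exists_uniform_radius_popa {φ h : ℝ → ℝ} {ρ v Kv T ε : ℝ} (hρ : 0 ≤ ρ)
    (hφ : IsSelfEquivarying φ ρ) (hv : Tendsto (shiftDiff φ h) (atTop ×ˢ 𝓝 v) (𝓝 Kv))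
    (hT : 0 < T) (hε : 0 < ε) :
    ∃ δ > 0, ∀ u ∈ Icc 0 T, ∀ Ku, Tendsto (fun x => shiftDiff φ h (x, u)) atTop (𝓝 Ku) →
      ∀ᶠ x in atTop, ∀ s, |s - popa ρ u v| < δ → |shiftDiff φ h (x, s) - (Ku + Kv)| < ε := by
  obtain ⟨δv, hδv, Xv, hXv⟩ := convNear_iff_tendsto.mpr hv (ε / 2) (half_pos hε)
  set η := min (1 / 2) (δv / (4 * (|v| + 1)))
  have hη : 0 < η := lt_min one_half_pos (by positivity)
  have hvη : |v| * η ≤ δv / 4 :=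
    calc |v| * η ≤ (|v| + 1) * (δv / (4 * (|v| + 1))) :=
          mul_le_mul (by linarith) (min_le_right _ _) hη.le (by positivity)
      _ = δv / 4 := by field_simp
  refine ⟨δv / 4, by positivity, fun u hu Ku hKu => ?_⟩
  filter_upwards [hφ.1, Metric.tendstoUniformlyOn_iff.mp (hφ.2.2 T hT) η hη,
    eventually_gt_atTop Xv, Metric.tendsto_nhds.mp hKu (ε / 2) (half_pos hε)]
    with x hφx hψ hxXv hxu s hs
  set x' := x + u * φ x
  have hψ' : |1 + ρ * u - φ x' / φ x| < η := hψ u hu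
  have hψ_half : 1 / 2 < φ x' / φ x := by
    have : 0 ≤ ρ * u := mul_nonneg hρ hu.1
    linarith [(abs_lt.mp hψ').2, min_le_left (1 / 2 : ℝ) (δv / (4 * (|v| + 1)))]
  have hφx' : 0 < φ x' := (div_pos_iff_of_pos_right hφx).mp (one_half_pos.trans hψ_half)
  have hx' : Xv < x' := hxXv.trans_le (le_add_of_nonneg_right (mul_nonneg hu.1 hφx.le))
  have hw : |(s - u) / (φ x' / φ x) - v| < δv := by
    refine abs_div_sub_lt_of_abs_sub_lt hψ_half ?_ hψ' hvη
    rwa [show s - u - v * (1 + ρ * u) = s - popa ρ u v by unfold popa; ring]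
  rw [shiftDiff_eq_shiftDiff_add h s hφx'.ne']
  calc |shiftDiff φ h (x', (s - u) / (φ x' / φ x)) + shiftDiff φ h (x, u) - (Ku + Kv)|
      ≤ |shiftDiff φ h (x', (s - u) / (φ x' / φ x)) - Kv| + |shiftDiff φ h (x, u) - Ku| := by
        rw [show ∀ a b : ℝ, a + b - (Ku + Kv) = (a - Kv) + (b - Ku) from fun _ _ => by ring]
        exact abs_add_le _ _
    _ < ε / 2 + ε / 2 := add_lt_add (hXv x' hx' _ hw) (by rwa [← Real.dist_eq])
    _ = ε := add_halves ε

lemma tendsto_shiftDiff_popa {φ h : ℝ → ℝ} {ρ u v Ku Kv : ℝ} (hρ : 0 ≤ ρ)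
    (hφ : IsSelfEquivarying φ ρ) (hu : 0 ≤ u)
    (hKu : Tendsto (fun x => shiftDiff φ h (x, u)) atTop (𝓝 Ku))
    (hv : Tendsto (shiftDiff φ h) (atTop ×ˢ 𝓝 v) (𝓝 Kv)) :
    Tendsto (shiftDiff φ h) (atTop ×ˢ 𝓝 (popa ρ u v)) (𝓝 (Ku + Kv)) := by
  refine Metric.tendsto_nhds.mpr fun ε hε => ?_
  obtain ⟨δ, hδ, hδu⟩ := exists_uniform_radius_popa (T := u + 1) hρ hφ hv (by linarith) hε
  filter_upwards [prod_mem_prod (hδu u ⟨hu, by linarith⟩ Ku hKu) (Metric.ball_mem_nhds _ hδ)]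
    with p hp
  exact hp.1 p.2 hp.2

theorem Au_eq_Ioi_of_subset_closure {φ h : ℝ → ℝ} {ρ : ℝ} (hρ : 0 < ρ)
    (hφ : IsSelfEquivarying φ ρ) (hdense : Ioi (-1 / ρ) ⊆ closure (Au φ h ρ)) :
    Au φ h ρ = Ioi (-1 / ρ) := by
  refine Subset.antisymm (fun t ht => ((mem_Au_iff hρ).mp ht).1) fun t ht => ?_
  obtain ⟨p, hp, hpt⟩ := exists_between (mem_Ioi.mp ht)
  obtain ⟨v, ⟨hv, hvt⟩, hvAu⟩ :=
    mem_closure_iff_nhds.mp (hdense hp) _ (Ioo_mem_nhds hp hpt)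
  obtain ⟨-, Kv, hKv⟩ := (mem_Au_iff hρ).mp hvAu
  have h1v : 0 < 1 + ρ * v := (neg_one_div_lt_iff hρ).mp hv
  set u₀ := (t - v) / (1 + ρ * v)
  have hu₀ : 0 < u₀ := div_pos (by linarith) h1v
  have hpopa : popa ρ u₀ v = t := by
    have : u₀ * (1 + ρ * v) = t - v := div_mul_cancel₀ _ h1v.ne'
    unfold popa; linear_combination this
  refine (mem_Au_iff hρ).mpr ⟨ht, exists_tendsto_of_forall_eventually_abs_sub_lt fun ε hε => ?_⟩
  obtain ⟨δ, hδ, hδu⟩ := exists_uniform_radius_popa (T := u₀ + 1) hρ.le hφ hKv (by linarith) hε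
  have hnear : ∀ᶠ u in 𝓝 u₀, u ∈ Icc 0 (u₀ + 1) ∧ |popa ρ u v - t| < δ / 2 := by
    have hcont : Tendsto (fun u => popa ρ u v) (𝓝 u₀) (𝓝 t) :=
      hpopa ▸ (show Continuous fun u => popa ρ u v by unfold popa; fun_prop).tendsto u₀
    exact Eventually.and (Icc_mem_nhds hu₀ (lt_add_one u₀))
      (Metric.tendsto_nhds.mp hcont _ (half_pos hδ))
  have hu₀mem : u₀ ∈ Ioi (-1 / ρ) := neg_one_div_lt_of_nonneg hρ hu₀.le
  obtain ⟨u, ⟨hu, hut⟩, huAu⟩ :=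
    (hnear.and_frequently (mem_closure_iff_frequently.mp (hdense hu₀mem))).exists
  obtain ⟨-, Ku, hKu⟩ := (mem_Au_iff hρ).mp huAu
  refine ⟨Ku + Kv, ?_⟩
  filter_upwards [prod_mem_prod (hδu u hu Ku (hKu.comp (tendsto_id.prodMk tendsto_const_nhds)))
    (Metric.ball_mem_nhds t (half_pos hδ))] with p ⟨hx, hs⟩
  refine hx p.2 ?_
  calc |p.2 - popa ρ u v| ≤ |p.2 - t| + |t - popa ρ u v| := abs_sub_le _ _ _
    _ < δ / 2 + δ / 2 := add_lt_add hs (by rwa [abs_sub_comm])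
    _ = δ := add_halves δ

lemma map_add_of_map_add_of_nonneg {g : ℝ → ℝ} (hg : ∀ a, 0 ≤ a → ∀ b, g (a + b) = g a + g b)
    (a b : ℝ) : g (a + b) = g a + g b := by
  rcases le_or_gt 0 a with ha | ha
  · exact hg a ha b
  have h0 : g 0 = 0 := by simpa using hg 0 le_rfl 0
  have h1 := hg (-a) (by linarith) (a + b)
  have h2 := hg (-a) (by linarith) a
  simp only [neg_add_cancel_left, neg_add_cancel, h0] at h1 h2
  linarith

theorem exists_eq_mul_log_of_map_popa {ρ : ℝ} (hρ : 0 < ρ) {K : ℝ → ℝ}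
    (hcont : ContinuousOn K (Ioi (-1 / ρ)))
    (hK : ∀ u, 0 ≤ u → ∀ v, -1 / ρ < v → K (popa ρ u v) = K u + K v) :
    ∃ c, ∀ t, -1 / ρ < t → K t = c * Real.log (1 + ρ * t) := by
  set e : ℝ → ℝ := fun y => (Real.exp y - 1) / ρ
  have he_mem : ∀ y, -1 / ρ < e y := fun y => by
    rw [neg_one_div_lt_iff hρ]; simp only [e]; field_simp; linarith [Real.exp_pos y]
  have he_nonneg : ∀ y, 0 ≤ y → 0 ≤ e y := fun y hy =>
    div_nonneg (by linarith [Real.add_one_le_exp y]) hρ.le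
  have he_add : ∀ a b, e (a + b) = popa ρ (e a) (e b) := fun a b => by
    simp only [e, popa, Real.exp_add]; field_simp; ring
  have he_log : ∀ t, -1 / ρ < t → e (Real.log (1 + ρ * t)) = t := fun t ht => by
    simp only [e, Real.exp_log ((neg_one_div_lt_iff hρ).mp ht)]; field_simp; ring
  let g : ℝ →+ ℝ := AddMonoidHom.mk' (K ∘ e) <| map_add_of_map_add_of_nonneg fun a ha b => by
    simp only [Function.comp, he_add, hK _ (he_nonneg a ha) _ (he_mem b)]
  have hg : Continuous g := hcont.comp_continuous (by fun_prop) he_mem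
  refine ⟨g 1, fun t ht => ?_⟩
  calc K t = g (Real.log (1 + ρ * t) • 1) := by simp [g, he_log t ht]
    _ = Real.log (1 + ρ * t) * g 1 := map_real_smul g hg _ _
    _ = g 1 * Real.log (1 + ρ * t) := mul_comm _ _

/-- Theorem 6 (Quantifier Weakening from Uniformity): for `ρ > 0`, if `A_u` is
dense in `G₊^ρ = (−1/ρ, ∞)` and `H†(t) = K(t)` on `A_u` (where `K(t)` is the
locally uniform limit of `Δ_t^φ h`), then `A_u = G₊^ρ` and there is `c` with
`H†(t) = c log(1 + ρt)` for all `t > −1/ρ`. -/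
theorem quantifier_weakening (φ : ℝ → ℝ) (ρ : ℝ) (hρ : 0 < ρ)
    (hφ : IsSelfEquivarying φ ρ) (h : ℝ → ℝ) (K : ℝ → ℝ)
    (hK : ∀ t ∈ Au φ h ρ, ConvNear φ h t (K t))
    (hdense : Set.Ioi (-1 / ρ) ⊆ closure (Au φ h ρ))
    (hHK : ∀ t ∈ Au φ h ρ, Hdag φ h t = ((K t : ℝ) : EReal)) :
    Au φ h ρ = Set.Ioi (-1 / ρ) ∧
    ∃ c : ℝ, ∀ t : ℝ, -1 / ρ < t →
      Hdag φ h t = ((c * Real.log (1 + ρ * t) : ℝ) : EReal) := by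
  have hAu := Au_eq_Ioi_of_subset_closure hρ hφ hdense
  have hlim : ∀ t, -1 / ρ < t → Tendsto (shiftDiff φ h) (atTop ×ˢ 𝓝 t) (𝓝 (K t)) :=
    fun t ht => convNear_iff_tendsto.mp (hK t (hAu ▸ ht))
  have hlim_at : ∀ t, -1 / ρ < t → Tendsto (fun x => shiftDiff φ h (x, t)) atTop (𝓝 (K t)) :=
    fun t ht => (hlim t ht).comp (tendsto_id.prodMk tendsto_const_nhds)
  have hcont : ContinuousOn K (Ioi (-1 / ρ)) := fun t ht =>
    (continuousAt_of_tendsto_prod (Eventually.mono (Ioi_mem_nhds ht) hlim_at)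
      (hlim t ht)).continuousWithinAt
  have hhom : ∀ u, 0 ≤ u → ∀ v, -1 / ρ < v → K (popa ρ u v) = K u + K v := fun u hu v hv =>
    tendsto_nhds_unique (hlim _ (neg_one_div_lt_popa hρ hu hv))
      (tendsto_shiftDiff_popa hρ.le hφ hu (hlim_at u (neg_one_div_lt_of_nonneg hρ hu))
        (hlim v hv))
  obtain ⟨c, hc⟩ := exists_eq_mul_log_of_map_popa hρ hcont hhom
  exact ⟨hAu, c, fun t ht => by rw [hHK t (hAu ▸ ht), hc t ht]⟩
end
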